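/- Let ρ ∈ (0,1), N_n = ⌊2^{n^ρ}⌋, and suppose ϑ : ℕ → (0,∞) satisfies ϑ(N) = c N^k (1 + O(exp(−c' √(log N)))) for constants c, c', k > 0. Then N_n^{−k} (ϑ(N_{n+1}) − ϑ(N_n)) ≤ C n^{ρ−1} for all n ≥ 1, with C depending only on ρ, k, c, c'. -/
import Mathlib

open Real Filter

/-- `N_n = ⌊2^{n^ρ}⌋`. -/
noncomputable def Nseq (ρ : ℝ) (n : ℕ) : ℕ := Nat.floor ((2 : ℝ) ^ ((n : ℝ) ^ ρ))

lemma Nseq_le_rpow (ρ : ℝ) (n : ℕ) : ((Nseq ρ n : ℕ) : ℝ) ≤ 2 ^ ((n : ℝ) ^ ρ) :=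
  Nat.floor_le (by positivity)

lemma rpow_sub_one_le_Nseq (ρ : ℝ) (n : ℕ) :
    (2 : ℝ) ^ ((n : ℝ) ^ ρ) - 1 ≤ ((Nseq ρ n : ℕ) : ℝ) := by
  have := Nat.lt_floor_add_one ((2 : ℝ) ^ ((n : ℝ) ^ ρ))
  unfold Nseq
  linarith

lemma two_le_Nseq {ρ : ℝ} (hρ0 : 0 < ρ) {n : ℕ} (hn : 1 ≤ n) : 2 ≤ Nseq ρ n := by
  have h1 : (1 : ℝ) ≤ (n : ℝ) := by exact_mod_cast hn
  have h2 : (1 : ℝ) ≤ (n : ℝ) ^ ρ := by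
    calc (1 : ℝ) = 1 ^ ρ := (Real.one_rpow ρ).symm
    _ ≤ (n : ℝ) ^ ρ := Real.rpow_le_rpow zero_le_one h1 hρ0.le
  have h3 : (2 : ℝ) ≤ 2 ^ ((n : ℝ) ^ ρ) := by
    calc (2 : ℝ) = 2 ^ (1 : ℝ) := (Real.rpow_one 2).symm
    _ ≤ 2 ^ ((n : ℝ) ^ ρ) := Real.rpow_le_rpow_of_exponent_le one_le_two h2
  exact Nat.le_floor (by exact_mod_cast h3)

lemma Nseq_mono {ρ : ℝ} (hρ0 : 0 ≤ ρ) {m n : ℕ} (h : m ≤ n) : Nseq ρ m ≤ Nseq ρ n := by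
  apply Nat.floor_le_floor
  apply Real.rpow_le_rpow_of_exponent_le one_le_two
  exact Real.rpow_le_rpow (by positivity) (by exact_mod_cast h) hρ0

lemma aux_tendsto (b γ s : ℝ) (hb : 0 < b) (hγ : 0 < γ) :
    Tendsto (fun n : ℕ => Real.exp (-b * (n : ℝ) ^ γ) * (n : ℝ) ^ s) atTop (nhds 0) := by
  have h1 : Tendsto (fun x : ℝ => x ^ (s / γ) * Real.exp (-b * x)) atTop (nhds 0) :=
    tendsto_rpow_mul_exp_neg_mul_atTop_nhds_zero _ _ hb
  have h2 : Tendsto (fun n : ℕ => (n : ℝ) ^ γ) atTop atTop :=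
    (tendsto_rpow_atTop hγ).comp tendsto_natCast_atTop_atTop
  have h3 := h1.comp h2
  refine h3.congr fun n => ?_
  have hγ' : γ ≠ 0 := hγ.ne'
  have hmul : γ * (s / γ) = s := by field_simp
  simp only [Function.comp_apply]
  rw [← Real.rpow_mul (Nat.cast_nonneg n), hmul, mul_comm]

set_option maxHeartbeats 1000000 in
/-- If `ϑ(N) = c N^k (1 + O(exp(−c'√(log N))))`, then with `N_n = ⌊2^{n^ρ}⌋`,
`N_n^{−k}(ϑ(N_{n+1}) − ϑ(N_n)) ≤ C n^{ρ−1}` for all `n ≥ 1`. -/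
theorem chebyshev_dyadic_increment (ρ : ℝ) (hρ0 : 0 < ρ) (hρ1 : ρ < 1)
    (c c' k : ℝ) (hc : 0 < c) (hc' : 0 < c') (hk : 0 < k)
    (ϑ : ℕ → ℝ) (hϑpos : ∀ N, 1 ≤ N → 0 < ϑ N)
    (C₀ : ℝ) (hC₀ : 0 < C₀)
    (hasymp : ∀ N : ℕ, 1 ≤ N →
      |ϑ N - c * (N : ℝ) ^ k| ≤ C₀ * (N : ℝ) ^ k * Real.exp (-c' * Real.sqrt (Real.log N))) :
    ∃ C > (0 : ℝ), ∀ n : ℕ, 1 ≤ n →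
      ((Nseq ρ n : ℝ)) ^ (-k) * (ϑ (Nseq ρ (n + 1)) - ϑ (Nseq ρ n)) ≤ C * (n : ℝ) ^ (ρ - 1) := by
  have hlog2 : (0 : ℝ) < Real.log 2 := Real.log_pos one_lt_two
  have hlog2' : Real.log 2 ≤ 1 := by
    have h := Real.log_le_sub_one_of_pos (by norm_num : (0:ℝ) < 2)
    linarith only [h]
  have hσ : (0 : ℝ) < 1 - (2 : ℝ) ^ (-ρ) := by
    have h : (2 : ℝ) ^ (-ρ) < 1 :=
      Real.rpow_lt_one_of_one_lt_of_neg one_lt_two (by linarith only [hρ0])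
    linarith only [h]
  set a2 : ℝ := (1 - (2 : ℝ) ^ (-ρ)) * Real.log 2 with ha2
  have ha2pos : 0 < a2 := mul_pos hσ hlog2
  set a : ℝ := Real.sqrt a2 with ha
  have hapos : 0 < a := Real.sqrt_pos.mpr ha2pos
  set K₁ : ℝ := c * k * Real.exp (2 * k) with hK₁
  set K₂ : ℝ := C₀ * (Real.exp (2 * k) + 1) with hK₂
  have hK₁pos : 0 < K₁ := by positivity
  have hK₂pos : 0 < K₂ := by positivity
  set g : ℕ → ℝ := fun m => ((Nseq ρ m : ℝ)) ^ (-k) * (ϑ (Nseq ρ (m + 1)) - ϑ (Nseq ρ m)) with hg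
  -- main pointwise estimate
  have main : ∀ n : ℕ, 2 ≤ n → g n * (n : ℝ) ^ (1 - ρ) ≤ K₁ * ρ * Real.log 2 +
      (2 * K₁ * Real.exp (-(Real.log 2) * (n : ℝ) ^ ρ) * (n : ℝ) ^ (1 - ρ)
        + K₂ * Real.exp (-(c' * a) * (n : ℝ) ^ (ρ / 2)) * (n : ℝ) ^ (1 - ρ)) := by
    intro n hn2
    have hn1 : 1 ≤ n := le_trans one_le_two hn2
    have hnR1 : (1 : ℝ) ≤ (n : ℝ) := by exact_mod_cast hn1
    have hnR2 : (2 : ℝ) ≤ (n : ℝ) := by exact_mod_cast hn2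
    have hnRpos : (0 : ℝ) < (n : ℝ) := by linarith only [hnR1]
    set p : ℝ := (n : ℝ) ^ ρ with hp
    set q : ℝ := (((n + 1 : ℕ)) : ℝ) ^ ρ with hq
    have hppos : 0 < p := Real.rpow_pos_of_pos hnRpos ρ
    have hp1 : 1 ≤ p := by
      calc (1 : ℝ) = 1 ^ ρ := (Real.one_rpow ρ).symm
      _ ≤ p := Real.rpow_le_rpow zero_le_one hnR1 hρ0.le
    have hpq : p ≤ q := by
      apply Real.rpow_le_rpow (by positivity) _ hρ0.le
      push_cast; linarith only []
    -- the increment of the exponent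
    have hδ : q - p ≤ ρ * (n : ℝ) ^ (ρ - 1) := by
      have hcast : (((n + 1 : ℕ)) : ℝ) = (n : ℝ) * (1 + 1 / (n : ℝ)) := by
        push_cast; field_simp
      have h1 : q = p * (1 + 1 / (n : ℝ)) ^ ρ := by
        rw [hq, hcast, Real.mul_rpow hnRpos.le (by positivity)]
      have hinv : (0 : ℝ) ≤ 1 / (n : ℝ) := by positivity
      have h2 : (1 + 1 / (n : ℝ)) ^ ρ ≤ 1 + ρ * (1 / (n : ℝ)) :=
        rpow_one_add_le_one_add_mul_self (by linarith only [hinv]) hρ0.le hρ1.le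
      have h3 : p * (ρ * (1 / (n : ℝ))) = ρ * (n : ℝ) ^ (ρ - 1) := by
        rw [Real.rpow_sub_one hnRpos.ne']; field_simp; ring
      have h4 := mul_le_mul_of_nonneg_left h2 hppos.le
      nlinarith only [h1, h3, h4]
    have hδ0 : 0 ≤ q - p := by linarith only [hpq]
    have hδ1 : q - p ≤ 1 := by
      have h5 : (n : ℝ) ^ (ρ - 1) ≤ 1 :=
        Real.rpow_le_one_of_one_le_of_nonpos hnR1 (by linarith only [hρ1])
      have h6 := mul_le_mul_of_nonneg_left h5 hρ0.le
      have h7 : ρ * 1 ≤ 1 := by linarith only [hρ1]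
      linarith only [hδ, h6, h7]
    -- the floors
    set Y : ℝ := ((Nseq ρ n : ℕ) : ℝ) with hY
    set X : ℝ := ((Nseq ρ (n + 1) : ℕ) : ℝ) with hX
    have hNn2 : 2 ≤ Nseq ρ n := two_le_Nseq hρ0 hn1
    have hNn12 : 2 ≤ Nseq ρ (n + 1) := two_le_Nseq hρ0 (le_trans hn1 (Nat.le_succ n))
    have hY2 : (2 : ℝ) ≤ Y := by rw [hY]; exact_mod_cast hNn2
    have hX2 : (2 : ℝ) ≤ X := by rw [hX]; exact_mod_cast hNn12
    have hYpos : (0 : ℝ) < Y := by linarith only [hY2]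
    have hXpos : (0 : ℝ) < X := by linarith only [hX2]
    have hYle : Y ≤ 2 ^ p := Nseq_le_rpow ρ n
    have hXle : X ≤ 2 ^ q := by
      have h := Nseq_le_rpow ρ (n + 1)
      rw [hX, hq]; exact_mod_cast h
    have hYge : 2 ^ p - 1 ≤ Y := rpow_sub_one_le_Nseq ρ n
    have hXY : Y ≤ X := by
      have h := Nseq_mono (ρ := ρ) hρ0.le (Nat.le_succ n)
      rw [hY, hX]; exact_mod_cast h
    have hXk : (0 : ℝ) < X ^ k := Real.rpow_pos_of_pos hXpos k
    have hYk : (0 : ℝ) < Y ^ k := Real.rpow_pos_of_pos hYpos k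
    -- asymptotics of ϑ
    set EX : ℝ := Real.exp (-c' * Real.sqrt (Real.log X)) with hEX
    set EY : ℝ := Real.exp (-c' * Real.sqrt (Real.log Y)) with hEYdef
    have hEXpos : 0 < EX := Real.exp_pos _
    have hEYpos : 0 < EY := Real.exp_pos _
    have hup := (abs_le.mp (hasymp (Nseq ρ (n + 1)) (le_trans one_le_two hNn12))).2
    have hlo := (abs_le.mp (hasymp (Nseq ρ n) (le_trans one_le_two hNn2))).1
    have hEXY : EX ≤ EY := by
      apply Real.exp_le_exp.mpr
      have h1 : Real.sqrt (Real.log Y) ≤ Real.sqrt (Real.log X) :=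
        Real.sqrt_le_sqrt (Real.log_le_log hYpos hXY)
      have h2 := mul_le_mul_of_nonneg_left h1 hc'.le
      linarith only [h2]
    have hstep : ϑ (Nseq ρ (n + 1)) - ϑ (Nseq ρ n)
        ≤ c * (X ^ k - Y ^ k) + C₀ * X ^ k * EY + C₀ * Y ^ k * EY := by
      have h1 : C₀ * X ^ k * EX ≤ C₀ * X ^ k * EY :=
        mul_le_mul_of_nonneg_left hEXY (by positivity)
      rw [← hX] at hup
      rw [← hEX] at hup
      rw [← hY] at hlo
      rw [← hEYdef] at hlo
      linarith only [hup, hlo, h1]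
    -- divide by Y^k
    have hg1 : g n ≤ c * (X ^ k / Y ^ k - 1) + C₀ * (X ^ k / Y ^ k) * EY + C₀ * EY := by
      have hYnk : Y ^ (-k) = (Y ^ k)⁻¹ := Real.rpow_neg hYpos.le k
      have e1 : (Y ^ k)⁻¹ * (c * (X ^ k - Y ^ k) + C₀ * X ^ k * EY + C₀ * Y ^ k * EY)
          = c * (X ^ k / Y ^ k - 1) + C₀ * (X ^ k / Y ^ k) * EY + C₀ * EY := by
        field_simp
      have e2 : g n = Y ^ (-k) * (ϑ (Nseq ρ (n + 1)) - ϑ (Nseq ρ n)) := rfl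
      rw [e2, hYnk, ← e1]
      exact mul_le_mul_of_nonneg_left hstep (by positivity)
    -- bound the ratio
    set t : ℝ := (2 : ℝ) ^ (-p) with htdef
    have htpos : 0 < t := Real.rpow_pos_of_pos two_pos _
    have htle : t ≤ 1 / 2 := by
      have h1 : (2 : ℝ) ^ (-p) ≤ 2 ^ (-1 : ℝ) :=
        Real.rpow_le_rpow_of_exponent_le one_le_two (by linarith only [hp1])
      rw [Real.rpow_neg_one] at h1
      rw [htdef]; linarith only [h1]
    have h2pt : (2 : ℝ) ^ p * t = 1 := by
      rw [htdef, ← Real.rpow_add two_pos]; simp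
    have h2ppos : (0 : ℝ) < 2 ^ p := Real.rpow_pos_of_pos two_pos _
    have hYge' : 2 ^ p * (1 - t) ≤ Y := by
      have e : (2:ℝ) ^ p * (1 - t) = 2 ^ p - 1 := by
        rw [mul_sub, mul_one, h2pt]
      rw [e]; exact hYge
    have hdenpos : (0 : ℝ) < 2 ^ p * (1 - t) := by
      nlinarith only [h2pt, htle, htpos, h2ppos]
    have hXYr : X / Y ≤ 2 ^ (q - p) * (1 + 2 * t) := by
      have h1 : X / Y ≤ 2 ^ q / (2 ^ p * (1 - t)) :=
        div_le_div₀ (by positivity) hXle hdenpos hYge'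
      have h3 : (1 : ℝ) / (1 - t) ≤ 1 + 2 * t := by
        rw [div_le_iff₀ (by linarith only [htle])]
        nlinarith only [htpos, htle]
      have h4 : (2 : ℝ) ^ q / (2 ^ p * (1 - t)) = 2 ^ (q - p) * (1 / (1 - t)) := by
        rw [Real.rpow_sub two_pos]; field_simp
      have h5 : (0 : ℝ) ≤ (2 : ℝ) ^ (q - p) := by positivity
      calc X / Y ≤ 2 ^ q / (2 ^ p * (1 - t)) := h1
      _ = 2 ^ (q - p) * (1 / (1 - t)) := h4
      _ ≤ 2 ^ (q - p) * (1 + 2 * t) := mul_le_mul_of_nonneg_left h3 h5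
    set w : ℝ := k * ((q - p) * Real.log 2 + 2 * t) with hw
    have hw0 : 0 ≤ w := by
      apply mul_nonneg hk.le
      have h := mul_nonneg hδ0 hlog2.le
      linarith only [h, htpos]
    have hw2k : w ≤ 2 * k := by
      have h1 : (q - p) * Real.log 2 ≤ 1 := by
        nlinarith only [hδ0, hδ1, hlog2, hlog2']
      have h2 : (q - p) * Real.log 2 + 2 * t ≤ 2 := by linarith only [h1, htle]
      rw [hw]; nlinarith only [h2, hk]
    have hQle : X ^ k / Y ^ k ≤ Real.exp w := by
      have hQr : X ^ k / Y ^ k = (X / Y) ^ k := (Real.div_rpow hXpos.le hYpos.le k).symm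
      have e1 : (2 : ℝ) ^ (q - p) = Real.exp ((q - p) * Real.log 2) := by
        rw [Real.rpow_def_of_pos two_pos]; ring_nf
      have e2 : 1 + 2 * t ≤ Real.exp (2 * t) := by
        have h := Real.add_one_le_exp (2 * t); linarith only [h]
      have h5 : X / Y ≤ Real.exp ((q - p) * Real.log 2 + 2 * t) := by
        calc X / Y ≤ 2 ^ (q - p) * (1 + 2 * t) := hXYr
        _ ≤ Real.exp ((q - p) * Real.log 2) * Real.exp (2 * t) := by
            rw [e1]; exact mul_le_mul_of_nonneg_left e2 (Real.exp_pos _).le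
        _ = Real.exp ((q - p) * Real.log 2 + 2 * t) := (Real.exp_add _ _).symm
      rw [hQr]
      calc (X / Y) ^ k ≤ (Real.exp ((q - p) * Real.log 2 + 2 * t)) ^ k :=
            Real.rpow_le_rpow (by positivity) h5 hk.le
      _ = Real.exp w := by rw [← Real.exp_mul, hw, mul_comm]
    have hexpw : Real.exp w ≤ Real.exp (2 * k) := Real.exp_le_exp.mpr hw2k
    have hQm1 : X ^ k / Y ^ k - 1 ≤ w * Real.exp (2 * k) := by
      have hA : 1 - w ≤ (Real.exp w)⁻¹ := by
        rw [← Real.exp_neg]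
        have h := Real.add_one_le_exp (-w); linarith only [h]
      have hB := mul_le_mul_of_nonneg_right hA (Real.exp_pos w).le
      rw [inv_mul_cancel₀ (Real.exp_pos w).ne'] at hB
      have h6 : Real.exp w - 1 ≤ w * Real.exp w := by linarith only [hB]
      have h7 : w * Real.exp w ≤ w * Real.exp (2 * k) :=
        mul_le_mul_of_nonneg_left hexpw hw0
      linarith only [hQle, h6, h7]
    -- bound EY
    have hEYbound : EY ≤ Real.exp (-(c' * a) * (n : ℝ) ^ (ρ / 2)) := by
      have hYge2 : (2 : ℝ) ^ (p - 1) ≤ Y := by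
        have e3 : (2 : ℝ) ^ (p - 1) = 2 ^ p * (1 / 2) := by
          rw [Real.rpow_sub two_pos, Real.rpow_one]; ring
        nlinarith only [e3, hYge', h2ppos, htle]
      have hlogY : a2 * p ≤ Real.log Y := by
        have l1 : Real.log ((2 : ℝ) ^ (p - 1)) = (p - 1) * Real.log 2 :=
          Real.log_rpow two_pos _
        have l2 : Real.log ((2 : ℝ) ^ (p - 1)) ≤ Real.log Y :=
          Real.log_le_log (by positivity) hYge2
        have l3 : (1 : ℝ) ≤ p * (2 : ℝ) ^ (-ρ) := by
          have m1 : (2 : ℝ) ^ ρ ≤ p := Real.rpow_le_rpow (by norm_num) hnR2 hρ0.le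
          have m2 : (0 : ℝ) < (2 : ℝ) ^ (-ρ) := Real.rpow_pos_of_pos two_pos _
          have m3 : (2 : ℝ) ^ ρ * (2 : ℝ) ^ (-ρ) = 1 := by
            rw [← Real.rpow_add two_pos]; simp
          nlinarith only [m1, m2, m3]
        have l4 : a2 * p ≤ (p - 1) * Real.log 2 := by
          rw [ha2]
          nlinarith only [l3, hlog2]
        linarith only [l1, l2, l4]
      have hsq : a * (n : ℝ) ^ (ρ / 2) ≤ Real.sqrt (Real.log Y) := by
        have s1 : Real.sqrt (a2 * p) ≤ Real.sqrt (Real.log Y) := Real.sqrt_le_sqrt hlogY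
        have s2 : Real.sqrt (a2 * p) = a * (n : ℝ) ^ (ρ / 2) := by
          rw [Real.sqrt_mul ha2pos.le, hp]
          congr 1
          rw [Real.sqrt_eq_rpow, ← Real.rpow_mul (Nat.cast_nonneg n),
            show ρ * (1 / 2) = ρ / 2 by ring]
        rw [s2] at s1; exact s1
      apply Real.exp_le_exp.mpr
      have m := mul_le_mul_of_nonneg_left hsq hc'.le
      linarith only [m]
    -- assemble
    have gbound : g n ≤ K₁ * ρ * Real.log 2 * (n : ℝ) ^ (ρ - 1) + 2 * K₁ * t
        + K₂ * Real.exp (-(c' * a) * (n : ℝ) ^ (ρ / 2)) := by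
      have b1 : c * (X ^ k / Y ^ k - 1) ≤ c * (w * Real.exp (2 * k)) :=
        mul_le_mul_of_nonneg_left hQm1 hc.le
      have b2 : c * (w * Real.exp (2 * k))
          = K₁ * ((q - p) * Real.log 2) + 2 * K₁ * t := by
        rw [hK₁, hw]; ring
      have b3 : K₁ * ((q - p) * Real.log 2) ≤ K₁ * ρ * Real.log 2 * (n : ℝ) ^ (ρ - 1) := by
        have h := mul_le_mul_of_nonneg_left
          (mul_le_mul_of_nonneg_right hδ hlog2.le) hK₁pos.le
        linarith only [h]
      have b4 : C₀ * (X ^ k / Y ^ k) * EY + C₀ * EY ≤ K₂ * EY := by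
        have q0 : X ^ k / Y ^ k ≤ Real.exp (2 * k) := le_trans hQle hexpw
        have h := mul_le_mul_of_nonneg_left
          (mul_le_mul_of_nonneg_right q0 hEYpos.le) hC₀.le
        rw [hK₂]
        linarith only [h]
      have b5 : K₂ * EY ≤ K₂ * Real.exp (-(c' * a) * (n : ℝ) ^ (ρ / 2)) :=
        mul_le_mul_of_nonneg_left hEYbound hK₂pos.le
      linarith only [hg1, b1, b2, b3, b4, b5]
    -- multiply by n^(1-ρ)
    have hnρ : (0 : ℝ) ≤ (n : ℝ) ^ (1 - ρ) := Real.rpow_nonneg hnRpos.le _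
    have hunit : (n : ℝ) ^ (ρ - 1) * (n : ℝ) ^ (1 - ρ) = 1 := by
      rw [← Real.rpow_add hnRpos]; norm_num
    have ht_exp : t = Real.exp (-(Real.log 2) * p) := by
      rw [htdef, Real.rpow_def_of_pos two_pos]
      congr 1; ring
    have hmul := mul_le_mul_of_nonneg_right gbound hnρ
    have e9 : (K₁ * ρ * Real.log 2 * (n : ℝ) ^ (ρ - 1) + 2 * K₁ * t
        + K₂ * Real.exp (-(c' * a) * (n : ℝ) ^ (ρ / 2))) * (n : ℝ) ^ (1 - ρ)
        = K₁ * ρ * Real.log 2 * ((n : ℝ) ^ (ρ - 1) * (n : ℝ) ^ (1 - ρ))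
          + 2 * K₁ * t * (n : ℝ) ^ (1 - ρ)
          + K₂ * Real.exp (-(c' * a) * (n : ℝ) ^ (ρ / 2)) * (n : ℝ) ^ (1 - ρ) := by ring
    rw [e9, hunit, mul_one, ht_exp] at hmul
    linarith only [hmul]
  -- eventual bound via tendsto
  have hFtend : Tendsto (fun n : ℕ =>
      2 * K₁ * Real.exp (-(Real.log 2) * (n : ℝ) ^ ρ) * (n : ℝ) ^ (1 - ρ)
        + K₂ * Real.exp (-(c' * a) * (n : ℝ) ^ (ρ / 2)) * (n : ℝ) ^ (1 - ρ))
      atTop (nhds 0) := by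
    have t1 := (aux_tendsto (Real.log 2) ρ (1 - ρ) hlog2 hρ0).const_mul (2 * K₁)
    have t2 := (aux_tendsto (c' * a) (ρ / 2) (1 - ρ) (mul_pos hc' hapos)
      (by linarith only [hρ0])).const_mul K₂
    have h := t1.add t2
    simp only [mul_zero, add_zero] at h
    refine h.congr fun n => ?_
    ring
  have hFev : ∀ᶠ n : ℕ in atTop, (2 * K₁ * Real.exp (-(Real.log 2) * (n : ℝ) ^ ρ) * (n : ℝ) ^ (1 - ρ)
      + K₂ * Real.exp (-(c' * a) * (n : ℝ) ^ (ρ / 2)) * (n : ℝ) ^ (1 - ρ)) ≤ 1 :=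
    hFtend.eventually (eventually_le_nhds zero_lt_one)
  obtain ⟨n₀, hn₀⟩ := eventually_atTop.mp (hFev.and (eventually_ge_atTop 2))
  set B : ℝ := K₁ * ρ * Real.log 2 + 1 with hB
  have hsum : (0 : ℝ) ≤ ∑ m ∈ Finset.range n₀, max (g m * (m : ℝ) ^ (1 - ρ)) 0 :=
    Finset.sum_nonneg fun m _ => le_max_right _ _
  have hmax1 : (1 : ℝ) ≤ max B 1 := le_max_right _ _
  refine ⟨max B 1 + ∑ m ∈ Finset.range n₀, max (g m * (m : ℝ) ^ (1 - ρ)) 0,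
    by linarith only [hsum, hmax1], ?_⟩
  intro n hn1
  have hnRpos : (0 : ℝ) < (n : ℝ) := by
    have : 0 < n := hn1
    exact_mod_cast this
  have hkey : g n * (n : ℝ) ^ (1 - ρ)
      ≤ max B 1 + ∑ m ∈ Finset.range n₀, max (g m * (m : ℝ) ^ (1 - ρ)) 0 := by
    rcases lt_or_ge n n₀ with h | h
    · have hm : n ∈ Finset.range n₀ := Finset.mem_range.mpr h
      have h1 : g n * (n : ℝ) ^ (1 - ρ) ≤ max (g n * (n : ℝ) ^ (1 - ρ)) 0 := le_max_left _ _
      have h2 : max (g n * (n : ℝ) ^ (1 - ρ)) 0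
          ≤ ∑ m ∈ Finset.range n₀, max (g m * (m : ℝ) ^ (1 - ρ)) 0 :=
        Finset.single_le_sum (f := fun m => max (g m * (m : ℝ) ^ (1 - ρ)) 0)
          (fun m _ => le_max_right _ _) hm
      have h3 : (0 : ℝ) ≤ max B 1 := by linarith only [hmax1]
      linarith only [h1, h2, h3]
    · obtain ⟨hF1, hn2⟩ := hn₀ n h
      have h3 := main n hn2
      have h4 : B ≤ max B 1 := le_max_left _ _
      rw [hB] at h4
      linarith only [h3, h4, hF1, hsum]
  have hunit : (n : ℝ) ^ (1 - ρ) * (n : ℝ) ^ (ρ - 1) = 1 := by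
    rw [← Real.rpow_add hnRpos]; norm_num
  calc g n = g n * ((n : ℝ) ^ (1 - ρ) * (n : ℝ) ^ (ρ - 1)) := by rw [hunit, mul_one]
  _ = (g n * (n : ℝ) ^ (1 - ρ)) * (n : ℝ) ^ (ρ - 1) := by ring
  _ ≤ _ := mul_le_mul_of_nonneg_right hkey (Real.rpow_nonneg hnRpos.le _)
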